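/- There exist a strictly increasing sequence of critical slopes 0 = v₀* < v₁* < v₂* < ⋯ and a strictly increasing sequence of areas 0 = a₀⁺ < a₁⁻ < a₁⁺ < a₂⁻ < a₂⁺ < ⋯ with a_ℓ^± ∈ [ℓw, 4ℓ] for every ℓ ≥ 1, such that: (1) for every v ∈ [0, v₁*) the pair (0, 0) is the unique minimizer of F_v; (2) for every ℓ ≥ 1 with v_ℓ* < 1 + ℓw/σ one has a_ℓ⁻ = ℓw, and for every v ∈ (v_ℓ*, 1 + ℓw/σ) the unique minimizer of F_v is (ℓ, ℓw); (3) for every ℓ ≥ 1 there is a continuous increasing bijection a_ℓ : [max(v_ℓ*, 1 + ℓw/σ), v_{ℓ+1}*] → [a_ℓ⁻, a_ℓ⁺] such that for every v in the open interval (max(v_ℓ*, 1 + ℓw/σ), v_{ℓ+1}*) the unique minimizer of F_v is (ℓ, a_ℓ(v)); (4) at each critical slope there is coexistence: F_{v_ℓ*}(ℓ−1, a_{ℓ−1}⁺) = F_{v_ℓ*}(ℓ, a_ℓ⁻) = min F_{v_ℓ*}, and for every ℓ ≥ 2 the per-layer areas satisfy a_{ℓ−1}⁺/(ℓ−1) >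 a_ℓ⁻/ℓ, equivalently the plaquette radii satisfy r²_{ℓ−1}(a_{ℓ−1}⁺) < r²_ℓ(a_ℓ⁻). -/

import Mathlib

/-- Surface tension of the type-2 stack of `ℓ` layers and area `a`:
`τ²_ℓ(a) = 8ℓ − 2√((4ℓ−a)(4−w)ℓ)`. -/
noncomputable def tau2 (w : ℝ) (ℓ : ℕ) (a : ℝ) : ℝ :=
  8 * (ℓ : ℝ) - 2 * Real.sqrt ((4 * (ℓ : ℝ) - a) * ((4 - w) * (ℓ : ℝ)))

/-- `G²_ℓ(a) = τ²_ℓ(a) + a²/(2σ)` (the finite branch). -/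
noncomputable def G2 (w σ : ℝ) (ℓ : ℕ) (a : ℝ) : ℝ :=
  tau2 w ℓ a + a ^ 2 / (2 * σ)

/-- Admissible pairs `(ℓ, a)` for the type-2 variational problem: either the empty stack
`(0, 0)`, or `ℓ ≥ 1` with `a ∈ [ℓw, 4ℓ]`.  (Outside this set `G²_ℓ(a) = +∞`.) -/
def Adm2 (w : ℝ) (p : ℕ × ℝ) : Prop :=
  (p.1 = 0 ∧ p.2 = 0) ∨ (1 ≤ p.1 ∧ (p.1 : ℝ) * w ≤ p.2 ∧ p.2 ≤ 4 * (p.1 : ℝ))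

/-- The objective `F_v(ℓ, a) = −v·a + G²_ℓ(a)` of the type-2 variational problem. -/
noncomputable def F2 (w σ v : ℝ) (p : ℕ × ℝ) : ℝ :=
  -v * p.2 + G2 w σ p.1 p.2

/-- `p` is the unique minimizer of `F_v` over admissible type-2 pairs. -/
def UniqueMin2 (w σ v : ℝ) (p : ℕ × ℝ) : Prop :=
  Adm2 w p ∧ (∀ q, Adm2 w q → F2 w σ v p ≤ F2 w σ v q) ∧
    ∀ q, Adm2 w q → (∀ q', Adm2 w q' → F2 w σ v q ≤ F2 w σ v q') → q = p

/-!
For fixed `ℓ ≥ 1` the map `a ↦ F_v(ℓ, a)` is `1/σ`-strongly convex on `[ℓw, 4ℓ]`, so it has a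
unique minimizer `a_ℓ(v)`: the root of the first-order condition `∂ₐG²_ℓ(a) = v` when `v` exceeds
the slope `1 + ℓw/σ` of `G²_ℓ` at `ℓw`, and `ℓw` otherwise. Comparing `F_v` and `F_{v'}` at the two
minimizers shows that `a_ℓ` is monotone and `σ`-Lipschitz, and then that the minimal energy
`M_ℓ(v)` has derivative `-a_ℓ(v)`. Since `a_ℓ(v)` increases strictly with `ℓ`, the energy gap
`M_{k+1} - M_k` decreases strictly in `v`, from positive values to negative ones; its zero is
`v*_{k+1}`. Concavity of `(x, y) ↦ √(xy)` makes `ℓ ↦ M_ℓ(v)` strictly convex, so the gaps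
increase with `k`, the critical slopes increase, and for `v` strictly between `v*_ℓ` and
`v*_{ℓ+1}` exactly `ℓ` layers minimize.
-/

def DiscreteConvex {α : Type*} [AddCommGroup α] [PartialOrder α] (f : ℕ → α) : Prop :=
  Monotone fun i => f (i + 1) - f i

namespace DiscreteConvex

variable {α : Type*} [AddCommGroup α] [PartialOrder α] [IsOrderedAddMonoid α] {f : ℕ → α}
  {n j : ℕ}

lemma lt_of_lt_succ (hf : DiscreteConvex f) (h : f n < f (n + 1)) (hj : n < j) : f n < f j :=
  Nat.rel_of_forall_rel_succ_of_le_of_lt (· < ·)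
    (fun _ hi => sub_pos.1 ((sub_pos.2 h).trans_le (hf hi))) le_rfl hj

lemma le_of_le_succ (hf : DiscreteConvex f) (h : f n ≤ f (n + 1)) (hj : n ≤ j) : f n ≤ f j :=
  Nat.rel_of_forall_rel_succ_of_le_of_le (· ≤ ·)
    (fun _ hi => sub_nonneg.1 ((sub_nonneg.2 h).trans (hf hi))) le_rfl hj

lemma lt_of_succ_lt (hf : DiscreteConvex f) (h : f (n + 1) < f n) (hj : j < n + 1) :
    f (n + 1) < f j := by
  refine strictAntiOn_Iic_of_succ_lt (fun i hi => ?_) (Set.mem_Iic.2 hj.le) Set.self_mem_Iic hj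
  rw [Order.succ_eq_add_one]
  exact sub_neg.1 ((hf (Nat.le_of_lt_succ hi)).trans_lt (sub_neg.2 h))

lemma le_of_succ_le (hf : DiscreteConvex f) (h : f (n + 1) ≤ f n) (hj : j ≤ n + 1) :
    f (n + 1) ≤ f j := by
  induction hj using Nat.decreasingInduction with
  | self => exact le_rfl
  | of_succ i hi ih => exact ih.trans (sub_nonpos.1 ((hf (Nat.le_of_lt_succ hi)).trans
      (sub_nonpos.2 h)))

end DiscreteConvex

lemma Real.sqrt_mul_add_sqrt_mul_le {x₁ y₁ x₂ y₂ : ℝ} (hx₁ : 0 ≤ x₁) (hy₁ : 0 ≤ y₁)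
    (hx₂ : 0 ≤ x₂) (hy₂ : 0 ≤ y₂) :
    Real.sqrt (x₁ * y₁) + Real.sqrt (x₂ * y₂) ≤ Real.sqrt ((x₁ + x₂) * (y₁ + y₂)) := by
  simpa [Fin.sum_univ_two, Real.sqrt_mul, hx₁, hx₂, add_nonneg hx₁ hx₂] using
    Real.sum_sqrt_mul_sqrt_le Finset.univ (f := ![x₁, x₂]) (g := ![y₁, y₂])
      (Fin.forall_fin_two.2 ⟨hx₁, hx₂⟩) (Fin.forall_fin_two.2 ⟨hy₁, hy₂⟩)

namespace VP2

open Set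

/-- The slope `∂ₐG²_ℓ` at the minimal area `ℓw`: up to this slope the optimal area is `ℓw`. -/
noncomputable def kinkSlope (w σ : ℝ) (ℓ : ℕ) : ℝ := 1 + (ℓ : ℝ) * w / σ

/-- `∂τ²_ℓ/∂a`, valid for `a < 4ℓ` (at `a = 4ℓ` the division by zero makes it `0`). -/
noncomputable def tau2Deriv (w : ℝ) (ℓ : ℕ) (a : ℝ) : ℝ :=
  Real.sqrt ((4 - w) * ℓ / (4 * ℓ - a))

noncomputable def G2Deriv (w σ : ℝ) (ℓ : ℕ) (a : ℝ) : ℝ := tau2Deriv w ℓ a + a / σ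

section Tau2

variable {w : ℝ} {ℓ ℓ' : ℕ} {a a' α : ℝ}

lemma tau2_minArea (hw4 : w < 4) (ℓ : ℕ) : tau2 w ℓ (ℓ * w) = 2 * ℓ * w := by
  have h : (4 * (ℓ : ℝ) - ℓ * w) * ((4 - w) * ℓ) = ((4 - w) * ℓ) ^ 2 := by ring
  rw [tau2, h, Real.sqrt_sq (mul_nonneg (by linarith) ℓ.cast_nonneg)]
  ring

lemma two_mul_mul_le_tau2 (hw4 : w < 4) (ha : a ∈ Icc ((ℓ : ℝ) * w) (4 * ℓ)) :
    2 * ℓ * w ≤ tau2 w ℓ a := by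
  have hc : 0 ≤ (4 - w) * ℓ := mul_nonneg (by linarith) ℓ.cast_nonneg
  have h : Real.sqrt ((4 * ℓ - a) * ((4 - w) * ℓ)) ≤ (4 - w) * ℓ :=
    (Real.sqrt_le_left hc).2 (by nlinarith [ha.1])
  rw [tau2]
  nlinarith

lemma tau2Deriv_minArea (hw4 : w < 4) (hℓ : 0 < ℓ) : tau2Deriv w ℓ (ℓ * w) = 1 := by
  have hl : (0 : ℝ) < ℓ := by exact_mod_cast hℓ
  have : (4 - w) * (ℓ : ℝ) / (4 * ℓ - ℓ * w) = 1 :=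
    (div_eq_one_iff_eq (by nlinarith)).2 (by ring)
  rw [tau2Deriv, this, Real.sqrt_one]

lemma tau2Deriv_mul_sqrt (hw4 : w < 4) (hℓ : 0 < ℓ) (hα : α < 4 * ℓ) :
    tau2Deriv w ℓ α * Real.sqrt ((4 * ℓ - α) * ((4 - w) * ℓ)) = (4 - w) * ℓ := by
  have hc : 0 < (4 - w) * (ℓ : ℝ) := mul_pos (by linarith) (by exact_mod_cast hℓ)
  have h4 : 0 < 4 * (ℓ : ℝ) - α := by linarith
  rw [tau2Deriv, ← Real.sqrt_mul (by positivity), div_mul_eq_mul_div, mul_comm (4 * (ℓ : ℝ) - α),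
    ← mul_assoc, mul_div_assoc, div_self h4.ne', mul_one, ← sq, Real.sqrt_sq hc.le]

lemma tau2_add_tau2Deriv_mul_le (hw4 : w < 4) (hℓ : 0 < ℓ) (hα : α < 4 * ℓ)
    (ha : a ≤ 4 * ℓ) : tau2 w ℓ α + tau2Deriv w ℓ α * (a - α) ≤ tau2 w ℓ a := by
  have hc : 0 < (4 - w) * (ℓ : ℝ) := mul_pos (by linarith) (by exact_mod_cast hℓ)
  set s := Real.sqrt ((4 * ℓ - α) * ((4 - w) * ℓ))
  set t := Real.sqrt ((4 * ℓ - a) * ((4 - w) * ℓ))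
  have hs : 0 < s := Real.sqrt_pos.2 (mul_pos (by linarith) hc)
  have hs2 : s ^ 2 = (4 * ℓ - α) * ((4 - w) * ℓ) := Real.sq_sqrt (by nlinarith)
  have ht2 : t ^ 2 = (4 * ℓ - a) * ((4 - w) * ℓ) := Real.sq_sqrt (by nlinarith)
  have hT := tau2Deriv_mul_sqrt hw4 hℓ hα
  -- `s · tau2Deriv α = (4 - w)ℓ` turns `s (2(s - t) - tau2Deriv α · (a - α))` into `(s - t)²`
  have key : tau2Deriv w ℓ α * (a - α) ≤ 2 * (s - t) := by
    refine le_of_mul_le_mul_left ?_ hs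
    nlinarith [sq_nonneg (s - t)]
  simp only [tau2]
  linarith

lemma tau2Deriv_lt_tau2Deriv_iff (hw4 : w < 4) (hℓ : 0 < ℓ) (hℓ' : 0 < ℓ')
    (ha : a < 4 * ℓ) (ha' : a' < 4 * ℓ') :
    tau2Deriv w ℓ a < tau2Deriv w ℓ' a' ↔ a * ℓ' < a' * ℓ := by
  have hl : (0 : ℝ) < ℓ := by exact_mod_cast hℓ
  have hl' : (0 : ℝ) < ℓ' := by exact_mod_cast hℓ'
  have hc : 0 < 4 - w := by linarith
  have e : (4 - w) * ℓ' * (4 * ℓ - a) - (4 - w) * ℓ * (4 * ℓ' - a')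
      = (4 - w) * (a' * ℓ - a * ℓ') := by
    ring
  rw [tau2Deriv, tau2Deriv, Real.sqrt_lt_sqrt_iff (by positivity),
    div_lt_div_iff₀ (by linarith) (by linarith), ← sub_pos, e, mul_pos_iff_of_pos_left hc, sub_pos]

end Tau2

section G2Deriv

variable {w σ : ℝ} {ℓ : ℕ} {a α v : ℝ}

lemma G2Deriv_minArea (hw4 : w < 4) (hℓ : 0 < ℓ) :
    G2Deriv w σ ℓ (ℓ * w) = kinkSlope w σ ℓ := by
  rw [G2Deriv, tau2Deriv_minArea hw4 hℓ, kinkSlope]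

lemma G2Deriv_strictMonoOn (hw4 : w < 4) (hσ : 0 < σ) (hℓ : 0 < ℓ) :
    StrictMonoOn (G2Deriv w σ ℓ) (Iio (4 * ℓ)) := by
  intro a ha a' ha' h
  have hl : (0 : ℝ) < ℓ := by exact_mod_cast hℓ
  have := (tau2Deriv_lt_tau2Deriv_iff hw4 hℓ hℓ ha ha').2 (by nlinarith)
  have := div_lt_div_of_pos_right h hσ
  simp only [G2Deriv]
  linarith

lemma continuousOn_G2Deriv : ContinuousOn (G2Deriv w σ ℓ) (Iio (4 * ℓ)) :=
  (Real.continuous_sqrt.comp_continuousOn (continuousOn_const.div (by fun_prop)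
    fun _ ha => (sub_pos.2 ha).ne')).add (continuousOn_id.div_const σ)

lemma exists_G2Deriv_eq (hw0 : 0 < w) (hw4 : w < 4) (hσ : 0 < σ) (hℓ : 0 < ℓ)
    (hv : kinkSlope w σ ℓ < v) : ∃ a ∈ Ico ((ℓ : ℝ) * w) (4 * ℓ), G2Deriv w σ ℓ a = v := by
  have hl : (0 : ℝ) < ℓ := by exact_mod_cast hℓ
  have hc : 0 < (4 - w) * (ℓ : ℝ) := mul_pos (by linarith) hl
  have hv1 : 1 < v := lt_of_le_of_lt (le_add_of_nonneg_right (by positivity)) hv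
  -- at `b`, the surface-tension slope alone already equals `v`
  set b := 4 * ℓ - (4 - w) * ℓ / v ^ 2 with hb
  have hb4 : b < 4 * ℓ := sub_lt_self _ (by positivity)
  have hbw : (ℓ : ℝ) * w < b := by
    have : (4 - w) * ℓ / v ^ 2 < (4 - w) * ℓ := div_lt_self hc (by nlinarith)
    rw [hb]
    linarith
  have hGb : v ≤ G2Deriv w σ ℓ b := by
    have : (4 - w) * ℓ / (4 * ℓ - b) = v ^ 2 := by
      rw [hb, sub_sub_cancel, div_div_cancel₀ hc.ne']
    rw [G2Deriv, tau2Deriv, this, Real.sqrt_sq (by linarith)]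
    have : 0 < b / σ := div_pos (by nlinarith) hσ
    linarith
  obtain ⟨a, ha, hGa⟩ := intermediate_value_Icc hbw.le
    (continuousOn_G2Deriv.mono fun x hx => lt_of_le_of_lt hx.2 hb4)
    ⟨(G2Deriv_minArea hw4 hℓ).trans_le hv.le, hGb⟩
  exact ⟨a, ⟨ha.1, ha.2.trans_lt hb4⟩, hGa⟩

lemma F2_add_G2Deriv_mul_add_sq_le (hw4 : w < 4) (hℓ : 0 < ℓ) (hα : α < 4 * ℓ)
    (ha : a ≤ 4 * ℓ) :
    F2 w σ v (ℓ, α) + (G2Deriv w σ ℓ α - v) * (a - α) + (a - α) ^ 2 / (2 * σ)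
      ≤ F2 w σ v (ℓ, a) := by
  have := tau2_add_tau2Deriv_mul_le hw4 hℓ hα ha
  have e : a ^ 2 / (2 * σ) = α ^ 2 / (2 * σ) + α / σ * (a - α) + (a - α) ^ 2 / (2 * σ) := by
    ring
  simp only [F2, G2, G2Deriv]
  linarith

end G2Deriv

/-- The minimizer of `a ↦ F_v(ℓ, a)` over `[ℓw, 4ℓ]`. -/
noncomputable def optArea (w σ : ℝ) (ℓ : ℕ) (v : ℝ) : ℝ :=
  open Classical in
  if h : kinkSlope w σ ℓ < v ∧ ∃ a ∈ Ico ((ℓ : ℝ) * w) (4 * ℓ), G2Deriv w σ ℓ a = v then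
    h.2.choose
  else ℓ * w

section OptArea

variable {w σ : ℝ} {ℓ ℓ' : ℕ} {a v v' : ℝ}

lemma optArea_of_le (hv : v ≤ kinkSlope w σ ℓ) : optArea w σ ℓ v = ℓ * w := by
  rw [optArea, dif_neg fun h => hv.not_gt h.1]

lemma optArea_zero (v : ℝ) : optArea w σ 0 v = 0 := by
  rw [optArea, dif_neg]
  · simp
  · rintro ⟨-, a, ha, -⟩
    simp at ha

lemma optArea_spec (hw0 : 0 < w) (hw4 : w < 4) (hσ : 0 < σ) (hℓ : 0 < ℓ) (v : ℝ) :
    optArea w σ ℓ v ∈ Ico ((ℓ : ℝ) * w) (4 * ℓ) ∧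
      G2Deriv w σ ℓ (optArea w σ ℓ v) = max v (kinkSlope w σ ℓ) := by
  rcases le_or_gt v (kinkSlope w σ ℓ) with hv | hv
  · have hl : (0 : ℝ) < ℓ := by exact_mod_cast hℓ
    rw [optArea_of_le hv, G2Deriv_minArea hw4 hℓ, max_eq_right hv]
    exact ⟨⟨le_rfl, by nlinarith⟩, rfl⟩
  · have h := And.intro hv (exists_G2Deriv_eq hw0 hw4 hσ hℓ hv)
    rw [optArea, dif_pos h, max_eq_left hv.le]
    exact h.2.choose_spec

lemma optArea_mem_Icc (hw0 : 0 < w) (hw4 : w < 4) (hσ : 0 < σ) (ℓ : ℕ) (v : ℝ) :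
    optArea w σ ℓ v ∈ Icc ((ℓ : ℝ) * w) (4 * ℓ) := by
  rcases ℓ.eq_zero_or_pos with rfl | hℓ
  · simp [optArea_zero]
  · exact Ico_subset_Icc_self (optArea_spec hw0 hw4 hσ hℓ v).1

lemma F2_optArea_add_sq_le (hw0 : 0 < w) (hw4 : w < 4) (hσ : 0 < σ)
    (ha : a ∈ Icc ((ℓ : ℝ) * w) (4 * ℓ)) :
    F2 w σ v (ℓ, optArea w σ ℓ v) + (a - optArea w σ ℓ v) ^ 2 / (2 * σ) ≤ F2 w σ v (ℓ, a) := by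
  rcases ℓ.eq_zero_or_pos with rfl | hℓ
  · obtain rfl : a = 0 := by simpa using ha
    simp [optArea_zero]
  obtain ⟨hA, hG⟩ := optArea_spec hw0 hw4 hσ hℓ v
  have hfoc : 0 ≤ (G2Deriv w σ ℓ (optArea w σ ℓ v) - v) * (a - optArea w σ ℓ v) := by
    rw [hG]
    rcases le_or_gt v (kinkSlope w σ ℓ) with hv | hv
    · rw [optArea_of_le hv]
      exact mul_nonneg (by simp) (by linarith [ha.1])
    · simp [max_eq_left hv.le]
  linarith [F2_add_G2Deriv_mul_add_sq_le (σ := σ) (v := v) hw4 hℓ hA.2 ha.2]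

lemma sq_optArea_sub_le (hw0 : 0 < w) (hw4 : w < 4) (hσ : 0 < σ) (ℓ : ℕ) (v v' : ℝ) :
    (optArea w σ ℓ v' - optArea w σ ℓ v) ^ 2
      ≤ σ * ((v' - v) * (optArea w σ ℓ v' - optArea w σ ℓ v)) := by
  have h := F2_optArea_add_sq_le hw0 hw4 hσ (v := v) (optArea_mem_Icc hw0 hw4 hσ ℓ v')
  have h' := F2_optArea_add_sq_le hw0 hw4 hσ (v := v') (optArea_mem_Icc hw0 hw4 hσ ℓ v)
  set A := optArea w σ ℓ v
  set A' := optArea w σ ℓ v'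
  have e : (A - A') ^ 2 / (2 * σ) + (A' - A) ^ 2 / (2 * σ) = (A' - A) ^ 2 / σ := by ring
  have : (A' - A) ^ 2 / σ ≤ (v' - v) * (A' - A) := by
    simp only [F2] at h h'
    linarith
  rwa [div_le_iff₀' hσ] at this

lemma optArea_monotone (hw0 : 0 < w) (hw4 : w < 4) (hσ : 0 < σ) (ℓ : ℕ) :
    Monotone (optArea w σ ℓ) := by
  intro v v' h
  by_contra! hlt
  nlinarith [sq_optArea_sub_le hw0 hw4 hσ ℓ v v', sq_pos_of_pos (sub_pos.2 hlt),
    mul_nonneg hσ.le (mul_nonneg (sub_nonneg.2 h) (sub_pos.2 hlt).le)]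

lemma abs_optArea_sub_le (hw0 : 0 < w) (hw4 : w < 4) (hσ : 0 < σ) (ℓ : ℕ) (v v' : ℝ) :
    |optArea w σ ℓ v' - optArea w σ ℓ v| ≤ σ * |v' - v| := by
  set d := optArea w σ ℓ v' - optArea w σ ℓ v
  have h : |d| * |d| ≤ σ * |v' - v| * |d| :=
    calc |d| * |d| = d ^ 2 := by rw [abs_mul_abs_self, sq]
      _ ≤ σ * ((v' - v) * d) := sq_optArea_sub_le hw0 hw4 hσ ℓ v v'
      _ ≤ σ * |v' - v| * |d| := by
        rw [mul_assoc, ← abs_mul]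
        exact mul_le_mul_of_nonneg_left (le_abs_self _) hσ.le
  rcases (abs_nonneg d).eq_or_lt with h0 | h0
  · rw [← h0]
    positivity
  · exact le_of_mul_le_mul_right h h0

lemma optArea_continuous (hw0 : 0 < w) (hw4 : w < 4) (hσ : 0 < σ) (ℓ : ℕ) :
    Continuous (optArea w σ ℓ) :=
  (LipschitzWith.of_dist_le' fun v' v => by
    simpa only [Real.dist_eq] using abs_optArea_sub_le hw0 hw4 hσ ℓ v v').continuous

lemma optArea_strictMonoOn (hw0 : 0 < w) (hw4 : w < 4) (hσ : 0 < σ) (hℓ : 0 < ℓ) :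
    StrictMonoOn (optArea w σ ℓ) (Ici (kinkSlope w σ ℓ)) := by
  intro v hv v' hv' h
  refine (optArea_monotone hw0 hw4 hσ ℓ h.le).lt_of_ne fun he => h.ne ?_
  have := congrArg (G2Deriv w σ ℓ) he
  rwa [(optArea_spec hw0 hw4 hσ hℓ v).2, (optArea_spec hw0 hw4 hσ hℓ v').2,
    max_eq_left (mem_Ici.1 hv), max_eq_left (mem_Ici.1 hv')] at this

lemma optArea_max_kinkSlope (v : ℝ) :
    optArea w σ ℓ (max v (kinkSlope w σ ℓ)) = optArea w σ ℓ v := by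
  rcases le_total v (kinkSlope w σ ℓ) with hv | hv
  · rw [max_eq_right hv, optArea_of_le le_rfl, optArea_of_le hv]
  · rw [max_eq_left hv]

lemma optArea_lt_optArea (hw0 : 0 < w) (hw4 : w < 4) (hσ : 0 < σ) (h : ℓ < ℓ') (v : ℝ) :
    optArea w σ ℓ v < optArea w σ ℓ' v := by
  obtain ⟨⟨ha'w, ha'4⟩, hG'⟩ := optArea_spec hw0 hw4 hσ (ℓ.zero_le.trans_lt h) v
  set a' := optArea w σ ℓ' v
  have hwa : (ℓ : ℝ) * w < a' :=
    (mul_lt_mul_of_pos_right (by exact_mod_cast h) hw0).trans_le ha'w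
  rcases ℓ.eq_zero_or_pos with rfl | hℓ
  · simpa [optArea_zero] using hwa
  obtain ⟨hA, hG⟩ := optArea_spec hw0 hw4 hσ hℓ v
  rcases le_or_gt (4 * (ℓ : ℝ)) a' with h4 | h4
  · exact hA.2.trans_le h4
  have hmono := G2Deriv_strictMonoOn (σ := σ) hw4 hσ hℓ
  -- `a'` lies past the `ℓ`-layer minimizer: there `∂ₐG²_ℓ` exceeds both `v` and `kinkSlope`
  refine (hmono.lt_iff_lt hA.2 h4).1 (hG ▸ max_lt ?_ ?_)
  · have hl : (0 : ℝ) < ℓ := by exact_mod_cast hℓ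
    have : tau2Deriv w ℓ' a' < tau2Deriv w ℓ a' :=
      (tau2Deriv_lt_tau2Deriv_iff hw4 (hℓ.trans h) hℓ ha'4 h4).2
        (mul_lt_mul_of_pos_left (by exact_mod_cast h) (by nlinarith))
    calc v ≤ G2Deriv w σ ℓ' a' := hG' ▸ le_max_left _ _
      _ < G2Deriv w σ ℓ a' := by simp only [G2Deriv]; linarith
  · exact G2Deriv_minArea (σ := σ) hw4 hℓ ▸ hmono (mem_Iio.2 (hA.1.trans_lt hA.2)) h4 hwa

lemma optArea_succ_div_lt (hw0 : 0 < w) (hw4 : w < 4) (hσ : 0 < σ) (hℓ : 0 < ℓ)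
    (hv : kinkSlope w σ ℓ < v) :
    optArea w σ (ℓ + 1) v / ((ℓ : ℝ) + 1) < optArea w σ ℓ v / ℓ := by
  obtain ⟨hA, hG⟩ := optArea_spec hw0 hw4 hσ hℓ v
  obtain ⟨hA', hG'⟩ := optArea_spec hw0 hw4 hσ ℓ.succ_pos v
  have hwy : (ℓ : ℝ) * w < optArea w σ ℓ v := by
    simpa [optArea_of_le le_rfl] using
      optArea_strictMonoOn hw0 hw4 hσ hℓ self_mem_Ici (mem_Ici.2 hv.le) hv
  have hxy := optArea_lt_optArea hw0 hw4 hσ ℓ.lt_succ_self v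
  set y := optArea w σ ℓ v
  set x := optArea w σ (ℓ + 1) v
  have hl : (0 : ℝ) < ℓ := by exact_mod_cast hℓ
  rw [div_lt_div_iff₀ (by positivity) hl]
  by_contra! hle
  rcases le_or_gt v (kinkSlope w σ (ℓ + 1)) with hv' | hv'
  · rw [show x = (ℓ + 1) * w by simp [x, optArea_of_le hv']] at hle
    nlinarith
  · -- both minimizers solve `∂ₐG² = v`, yet `x` would have the larger area and `tau2Deriv`
    have hT : tau2Deriv w ℓ y ≤ tau2Deriv w (ℓ + 1) x := by
      rw [← not_lt, tau2Deriv_lt_tau2Deriv_iff hw4 ℓ.succ_pos hℓ hA'.2 hA.2]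
      push_cast
      linarith
    rw [max_eq_left hv.le] at hG
    rw [max_eq_left hv'.le] at hG'
    have := div_lt_div_of_pos_right hxy hσ
    simp only [G2Deriv] at hG hG'
    linarith

end OptArea

lemma adm2_iff {w : ℝ} {q : ℕ × ℝ} : Adm2 w q ↔ q.2 ∈ Icc ((q.1 : ℝ) * w) (4 * q.1) := by
  rcases q with ⟨_ | ℓ, a⟩ <;> simp [Adm2]

lemma uniqueMin2_of_lt {w σ v : ℝ} {p : ℕ × ℝ} (hp : Adm2 w p)
    (h : ∀ q, Adm2 w q → q ≠ p → F2 w σ v p < F2 w σ v q) : UniqueMin2 w σ v p :=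
  ⟨hp, fun q hq => (eq_or_ne q p).elim (fun e => e ▸ le_rfl) fun hne => (h q hq hne).le,
    fun q hq hmin => by_contra fun hne => (h q hq hne).not_ge (hmin p hp)⟩

noncomputable def minEnergy (w σ : ℝ) (ℓ : ℕ) (v : ℝ) : ℝ := F2 w σ v (ℓ, optArea w σ ℓ v)

section MinEnergy

variable {w σ : ℝ} {ℓ : ℕ} {a v : ℝ}

lemma minEnergy_le (hw0 : 0 < w) (hw4 : w < 4) (hσ : 0 < σ)
    (ha : a ∈ Icc ((ℓ : ℝ) * w) (4 * ℓ)) : minEnergy w σ ℓ v ≤ F2 w σ v (ℓ, a) := by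
  have := F2_optArea_add_sq_le (v := v) hw0 hw4 hσ ha
  have : 0 ≤ (a - optArea w σ ℓ v) ^ 2 / (2 * σ) := by positivity
  rw [minEnergy]
  linarith

lemma minEnergy_lt (hw0 : 0 < w) (hw4 : w < 4) (hσ : 0 < σ)
    (ha : a ∈ Icc ((ℓ : ℝ) * w) (4 * ℓ)) (hne : a ≠ optArea w σ ℓ v) :
    minEnergy w σ ℓ v < F2 w σ v (ℓ, a) := by
  have := F2_optArea_add_sq_le (v := v) hw0 hw4 hσ ha
  have : 0 < (a - optArea w σ ℓ v) ^ 2 / (2 * σ) :=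
    div_pos (sq_pos_of_ne_zero (sub_ne_zero.2 hne)) (by positivity)
  rw [minEnergy]
  linarith

lemma minEnergy_of_le_kinkSlope (hw4 : w < 4) (hv : v ≤ kinkSlope w σ ℓ) :
    minEnergy w σ ℓ v = -v * (ℓ * w) + 2 * ℓ * w + (ℓ * w) ^ 2 / (2 * σ) := by
  simp only [minEnergy, optArea_of_le hv, F2, G2, tau2_minArea hw4]
  ring

lemma minEnergy_le_sub (hw0 : 0 < w) (hw4 : w < 4) (hσ : 0 < σ) (v v' : ℝ) :
    minEnergy w σ ℓ v' ≤ minEnergy w σ ℓ v - (v' - v) * optArea w σ ℓ v :=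
  (minEnergy_le hw0 hw4 hσ (optArea_mem_Icc hw0 hw4 hσ ℓ v)).trans_eq
    (by simp only [minEnergy, F2]; ring)

lemma abs_minEnergy_sub_add_le (hw0 : 0 < w) (hw4 : w < 4) (hσ : 0 < σ) (v v' : ℝ) :
    |minEnergy w σ ℓ v' - minEnergy w σ ℓ v + (v' - v) * optArea w σ ℓ v|
      ≤ σ * (v' - v) ^ 2 := by
  have h₁ := minEnergy_le_sub (ℓ := ℓ) hw0 hw4 hσ v v'
  have h₂ := minEnergy_le_sub (ℓ := ℓ) hw0 hw4 hσ v' v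
  have h₃ : |(v' - v) * (optArea w σ ℓ v' - optArea w σ ℓ v)| ≤ σ * (v' - v) ^ 2 := by
    rw [abs_mul, ← sq_abs (v' - v)]
    nlinarith [abs_optArea_sub_le hw0 hw4 hσ ℓ v v', abs_nonneg (v' - v)]
  rw [abs_le]
  constructor <;> nlinarith [le_abs_self ((v' - v) * (optArea w σ ℓ v' - optArea w σ ℓ v)),
    sq_nonneg (v' - v)]

lemma hasDerivAt_minEnergy (hw0 : 0 < w) (hw4 : w < 4) (hσ : 0 < σ) (ℓ : ℕ) (v : ℝ) :
    HasDerivAt (minEnergy w σ ℓ) (-optArea w σ ℓ v) v := by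
  rw [hasDerivAt_iff_isLittleO]
  refine (Asymptotics.IsBigO.of_bound σ (Filter.Eventually.of_forall fun v' => ?_)).trans_isLittleO
    (Asymptotics.isLittleO_pow_sub_sub v one_lt_two)
  simpa [smul_eq_mul, sub_eq_add_neg] using abs_minEnergy_sub_add_le (ℓ := ℓ) hw0 hw4 hσ v v'

end MinEnergy

/-- The geometric mean `√(xy)` is concave, which makes `τ²` jointly convex in `(ℓ, a)`. -/
lemma two_mul_F2_midpoint_lt {w σ v : ℝ} (hw4 : w < 4) (hσ : 0 < σ) {k : ℕ} {a₁ a₂ : ℝ}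
    (h₁ : a₁ ≤ 4 * k) (h₂ : a₂ ≤ 4 * (k + 2)) (hne : a₁ ≠ a₂) :
    2 * F2 w σ v (k + 1, (a₁ + a₂) / 2) < F2 w σ v (k, a₁) + F2 w σ v (k + 2, a₂) := by
  have hk : (0 : ℝ) ≤ k := k.cast_nonneg
  have hcs := Real.sqrt_mul_add_sqrt_mul_le (x₁ := 4 * k - a₁) (y₁ := (4 - w) * k)
    (x₂ := 4 * (k + 2) - a₂) (y₂ := (4 - w) * (k + 2)) (sub_nonneg.2 h₁)
    (mul_nonneg (by linarith) hk) (sub_nonneg.2 h₂) (mul_nonneg (by linarith) (by linarith))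
  have hmid : Real.sqrt ((4 * k - a₁ + (4 * (k + 2) - a₂)) * ((4 - w) * k + (4 - w) * (k + 2)))
      = 2 * Real.sqrt ((4 * (k + 1) - (a₁ + a₂) / 2) * ((4 - w) * (k + 1))) := by
    rw [← Real.sqrt_sq zero_le_two, ← Real.sqrt_mul (sq_nonneg 2)]
    congr 1
    ring
  have hquad : 0 < (a₁ - a₂) ^ 2 / (4 * σ) :=
    div_pos (sq_pos_of_ne_zero (sub_ne_zero.2 hne)) (by positivity)
  have e : 2 * (((a₁ + a₂) / 2) ^ 2 / (2 * σ))
      = a₁ ^ 2 / (2 * σ) + a₂ ^ 2 / (2 * σ) - (a₁ - a₂) ^ 2 / (4 * σ) := by ring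
  simp only [F2, G2, tau2]
  push_cast
  linarith

noncomputable def energyGap (w σ : ℝ) (k : ℕ) (v : ℝ) : ℝ :=
  minEnergy w σ (k + 1) v - minEnergy w σ k v

section EnergyGap

variable {w σ : ℝ} {k : ℕ} {v : ℝ}

lemma hasDerivAt_energyGap (hw0 : 0 < w) (hw4 : w < 4) (hσ : 0 < σ) (k : ℕ) (v : ℝ) :
    HasDerivAt (energyGap w σ k) (optArea w σ k v - optArea w σ (k + 1) v) v :=
  ((hasDerivAt_minEnergy hw0 hw4 hσ (k + 1) v).sub
    (hasDerivAt_minEnergy hw0 hw4 hσ k v)).congr_deriv (by ring)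

lemma energyGap_strictAnti (hw0 : 0 < w) (hw4 : w < 4) (hσ : 0 < σ) (k : ℕ) :
    StrictAnti (energyGap w σ k) :=
  strictAnti_of_hasDerivAt_neg (hasDerivAt_energyGap hw0 hw4 hσ k) fun v =>
    sub_neg.2 (optArea_lt_optArea hw0 hw4 hσ k.lt_succ_self v)

lemma energyGap_continuous (hw0 : 0 < w) (hw4 : w < 4) (hσ : 0 < σ) (k : ℕ) :
    Continuous (energyGap w σ k) :=
  continuous_iff_continuousAt.2 fun v => (hasDerivAt_energyGap hw0 hw4 hσ k v).continuousAt

lemma energyGap_pos_of_le_kinkSlope (hw0 : 0 < w) (hw4 : w < 4) (hσ : 0 < σ)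
    (hv : v ≤ kinkSlope w σ k) : 0 < energyGap w σ k v := by
  have hkk : kinkSlope w σ k ≤ kinkSlope w σ (k + 1) := by
    simp only [kinkSlope]
    push_cast
    gcongr
    linarith
  rw [energyGap, minEnergy_of_le_kinkSlope hw4 (hv.trans hkk), minEnergy_of_le_kinkSlope hw4 hv]
  rw [kinkSlope] at hv
  have hvw := mul_le_mul_of_nonneg_right hv hw0.le
  have e : (k * w / σ) * w = k * w ^ 2 / σ := by ring
  have e' : ((k + 1) * w) ^ 2 / (2 * σ) - (k * w) ^ 2 / (2 * σ)
      = k * w ^ 2 / σ + w ^ 2 / (2 * σ) := by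
    ring
  have : 0 < w ^ 2 / (2 * σ) := by positivity
  push_cast
  nlinarith

lemma exists_energyGap_neg (hw0 : 0 < w) (hw4 : w < 4) (hσ : 0 < σ) (k : ℕ) :
    ∃ v, energyGap w σ k v < 0 := by
  have hk : (0 : ℝ) ≤ k := k.cast_nonneg
  set v : ℝ := 2 * (k + 1) * (1 + (k + 1) / σ) + 1 with hv_def
  refine ⟨v, ?_⟩
  have hv : 0 ≤ v := by positivity
  -- compare a full stack `a = 4(k + 1)` with the bound `M_k(v) ≥ -4kv`
  have hfull : ((k + 1 : ℕ) : ℝ) * w ≤ 4 * (k + 1 : ℕ) := by push_cast; nlinarith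
  have h₁ := minEnergy_le (v := v) hw0 hw4 hσ ⟨hfull, le_rfl⟩
  have hA := optArea_mem_Icc hw0 hw4 hσ k v
  have h₂ := two_mul_mul_le_tau2 hw4 hA
  have : 0 ≤ optArea w σ k v ^ 2 / (2 * σ) := by positivity
  have : 0 ≤ (k : ℝ) * w := mul_nonneg hk hw0.le
  have : v * optArea w σ k v ≤ v * (4 * k) := mul_le_mul_of_nonneg_left hA.2 hv
  have e : (4 * ((k : ℝ) + 1)) ^ 2 / (2 * σ) = 8 * ((k + 1) * ((k + 1) / σ)) := by ring
  simp only [energyGap, minEnergy, F2, G2, tau2] at h₁ h₂ ⊢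
  simp only [Nat.cast_add, Nat.cast_one, sub_self, zero_mul, Real.sqrt_zero] at h₁ ⊢
  linarith

lemma energyGap_lt_energyGap_succ (hw0 : 0 < w) (hw4 : w < 4) (hσ : 0 < σ) (k : ℕ) (v : ℝ) :
    energyGap w σ k v < energyGap w σ (k + 1) v := by
  have h₁ := optArea_mem_Icc hw0 hw4 hσ k v
  have h₂ := optArea_mem_Icc hw0 hw4 hσ (k + 2) v
  push_cast at h₂
  have hmid : (optArea w σ k v + optArea w σ (k + 2) v) / 2
      ∈ Icc (((k + 1 : ℕ) : ℝ) * w) (4 * (k + 1 : ℕ)) := by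
    push_cast
    constructor <;> linarith [h₁.1, h₁.2, h₂.1, h₂.2]
  have := minEnergy_le (v := v) hw0 hw4 hσ hmid
  have := two_mul_F2_midpoint_lt (v := v) hw4 hσ h₁.2 h₂.2
    (optArea_lt_optArea hw0 hw4 hσ (by omega : k < k + 2) v).ne
  simp only [energyGap, minEnergy] at *
  push_cast at *
  linarith

end EnergyGap

/-- The critical slopes `v*_ℓ`; `Classical.epsilon` picks the unique zero of `energyGap k`. -/
noncomputable def critSlope (w σ : ℝ) : ℕ → ℝ
  | 0 => 0
  | k + 1 => Classical.epsilon fun v => energyGap w σ k v = 0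

section CritSlope

variable {w σ : ℝ} {k ℓ : ℕ} {v : ℝ}

lemma energyGap_critSlope (hw0 : 0 < w) (hw4 : w < 4) (hσ : 0 < σ) (k : ℕ) :
    energyGap w σ k (critSlope w σ (k + 1)) = 0 := by
  obtain ⟨V, hV⟩ := exists_energyGap_neg hw0 hw4 hσ k
  obtain ⟨v, hv⟩ := intermediate_value_univ V (kinkSlope w σ k)
    (energyGap_continuous hw0 hw4 hσ k)
    ⟨hV.le, (energyGap_pos_of_le_kinkSlope hw0 hw4 hσ le_rfl).le⟩
  exact Classical.epsilon_spec (p := fun v => energyGap w σ k v = 0) ⟨v, hv⟩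

lemma energyGap_pos_iff (hw0 : 0 < w) (hw4 : w < 4) (hσ : 0 < σ) :
    0 < energyGap w σ k v ↔ v < critSlope w σ (k + 1) := by
  rw [← energyGap_critSlope hw0 hw4 hσ k]
  exact (energyGap_strictAnti hw0 hw4 hσ k).lt_iff_gt

lemma energyGap_neg_iff (hw0 : 0 < w) (hw4 : w < 4) (hσ : 0 < σ) :
    energyGap w σ k v < 0 ↔ critSlope w σ (k + 1) < v := by
  rw [← energyGap_critSlope hw0 hw4 hσ k]
  exact (energyGap_strictAnti hw0 hw4 hσ k).lt_iff_gt

lemma kinkSlope_lt_critSlope (hw0 : 0 < w) (hw4 : w < 4) (hσ : 0 < σ) (ℓ : ℕ) :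
    kinkSlope w σ ℓ < critSlope w σ (ℓ + 1) :=
  (energyGap_pos_iff hw0 hw4 hσ).1 (energyGap_pos_of_le_kinkSlope hw0 hw4 hσ le_rfl)

lemma critSlope_strictMono (hw0 : 0 < w) (hw4 : w < 4) (hσ : 0 < σ) :
    StrictMono (critSlope w σ) := by
  refine strictMono_nat_of_lt_succ fun k => ?_
  cases k with
  | zero =>
    exact (by simp [kinkSlope] : (0 : ℝ) < kinkSlope w σ 0).trans
      (kinkSlope_lt_critSlope hw0 hw4 hσ 0)
  | succ k =>
    exact (energyGap_pos_iff hw0 hw4 hσ).1 ((energyGap_critSlope hw0 hw4 hσ k).symm.trans_lt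
      (energyGap_lt_energyGap_succ hw0 hw4 hσ k _))

lemma optArea_critSlope_lt (hw0 : 0 < w) (hw4 : w < 4) (hσ : 0 < σ) (hℓ : 0 < ℓ) :
    optArea w σ ℓ (critSlope w σ ℓ) < optArea w σ ℓ (critSlope w σ (ℓ + 1)) := by
  rw [← optArea_max_kinkSlope]
  exact optArea_strictMonoOn hw0 hw4 hσ hℓ (mem_Ici.2 (le_max_right _ _))
    (kinkSlope_lt_critSlope hw0 hw4 hσ ℓ).le
    (max_lt (critSlope_strictMono hw0 hw4 hσ ℓ.lt_succ_self) (kinkSlope_lt_critSlope hw0 hw4 hσ ℓ))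

lemma discreteConvex_minEnergy (hw0 : 0 < w) (hw4 : w < 4) (hσ : 0 < σ) (v : ℝ) :
    DiscreteConvex fun ℓ => minEnergy w σ ℓ v :=
  monotone_nat_of_le_succ fun k => (energyGap_lt_energyGap_succ hw0 hw4 hσ k v).le

lemma uniqueMin2_of_minEnergy_lt (hw0 : 0 < w) (hw4 : w < 4) (hσ : 0 < σ)
    (hmin : ∀ j ≠ ℓ, minEnergy w σ ℓ v < minEnergy w σ j v) :
    UniqueMin2 w σ v (ℓ, optArea w σ ℓ v) := by
  refine uniqueMin2_of_lt (adm2_iff.2 (optArea_mem_Icc hw0 hw4 hσ ℓ v)) ?_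
  rintro ⟨j, a⟩ hq hne
  rw [adm2_iff] at hq
  obtain rfl | hj := eq_or_ne j ℓ
  · exact minEnergy_lt hw0 hw4 hσ hq fun ha => hne (by rw [ha])
  · exact (hmin j hj).trans_le (minEnergy_le hw0 hw4 hσ hq)

lemma uniqueMin2_zero (hw0 : 0 < w) (hw4 : w < 4) (hσ : 0 < σ) (hv : v < critSlope w σ 1) :
    UniqueMin2 w σ v (0, 0) := by
  have h := sub_pos.1 ((energyGap_pos_iff (k := 0) hw0 hw4 hσ).2 hv)
  simpa only [optArea_zero] using uniqueMin2_of_minEnergy_lt hw0 hw4 hσ fun j hj =>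
    (discreteConvex_minEnergy hw0 hw4 hσ v).lt_of_lt_succ h (Nat.pos_of_ne_zero hj)

lemma uniqueMin2_optArea (hw0 : 0 < w) (hw4 : w < 4) (hσ : 0 < σ) (hℓ : 0 < ℓ)
    (h₁ : critSlope w σ ℓ < v) (h₂ : v < critSlope w σ (ℓ + 1)) :
    UniqueMin2 w σ v (ℓ, optArea w σ ℓ v) := by
  obtain ⟨k, rfl⟩ := Nat.exists_eq_add_of_le' hℓ
  have hdown := sub_neg.1 ((energyGap_neg_iff hw0 hw4 hσ).2 h₁)
  have hup := sub_pos.1 ((energyGap_pos_iff hw0 hw4 hσ).2 h₂)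
  refine uniqueMin2_of_minEnergy_lt hw0 hw4 hσ fun j hj => ?_
  rcases hj.lt_or_gt with hj | hj
  · exact (discreteConvex_minEnergy hw0 hw4 hσ v).lt_of_succ_lt hdown hj
  · exact (discreteConvex_minEnergy hw0 hw4 hσ v).lt_of_lt_succ hup hj

lemma F2_critSlope_le (hw0 : 0 < w) (hw4 : w < 4) (hσ : 0 < σ) (k : ℕ) {q : ℕ × ℝ}
    (hq : Adm2 w q) :
    F2 w σ (critSlope w σ (k + 1)) (k + 1, optArea w σ (k + 1) (critSlope w σ (k + 1)))
      ≤ F2 w σ (critSlope w σ (k + 1)) q := by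
  have hf := discreteConvex_minEnergy hw0 hw4 hσ (critSlope w σ (k + 1))
  have hdown := sub_nonpos.1 (energyGap_critSlope hw0 hw4 hσ k).le
  have hup := sub_nonneg.1 ((energyGap_pos_iff hw0 hw4 hσ).2
    (critSlope_strictMono hw0 hw4 hσ (k + 1).lt_succ_self)).le
  exact ((le_total q.1 (k + 1)).elim (hf.le_of_succ_le hdown) (hf.le_of_le_succ hup)).trans
    (minEnergy_le hw0 hw4 hσ (adm2_iff.1 hq))

end CritSlope

end VP2

theorem structure_theorem_type2_general (w σ : ℝ) (hw0 : 0 < w) (hw4 : w < 4) (hσ : 0 < σ) :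
    ∃ vs am ap : ℕ → ℝ,
      -- strictly increasing critical slopes `0 = v₀* < v₁* < ⋯`
      vs 0 = 0 ∧ StrictMono vs ∧
      -- strictly increasing areas `0 = a₀⁺ < a₁⁻ < a₁⁺ < a₂⁻ < ⋯`
      ap 0 = 0 ∧ (∀ ℓ : ℕ, 1 ≤ ℓ → ap (ℓ - 1) < am ℓ ∧ am ℓ < ap ℓ) ∧
      (∀ ℓ : ℕ, 1 ≤ ℓ → am ℓ ∈ Set.Icc ((ℓ : ℝ) * w) (4 * (ℓ : ℝ)) ∧
        ap ℓ ∈ Set.Icc ((ℓ : ℝ) * w) (4 * (ℓ : ℝ))) ∧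
      -- (1) for `v ∈ [0, v₁*)` the empty stack is the unique minimizer
      (∀ v : ℝ, 0 ≤ v → v < vs 1 → UniqueMin2 w σ v (0, 0)) ∧
      -- (2) if `v_ℓ* < 1 + ℓw/σ`, then `a_ℓ⁻ = ℓw` and for `v ∈ (v_ℓ*, 1 + ℓw/σ)`
      -- the unique minimizer is `(ℓ, ℓw)`
      (∀ ℓ : ℕ, 1 ≤ ℓ → vs ℓ < 1 + (ℓ : ℝ) * w / σ →
        am ℓ = (ℓ : ℝ) * w ∧
        ∀ v : ℝ, vs ℓ < v → v < 1 + (ℓ : ℝ) * w / σ →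
          UniqueMin2 w σ v (ℓ, (ℓ : ℝ) * w)) ∧
      -- (3) a continuous increasing bijection
      -- `a_ℓ : [max(v_ℓ*, 1+ℓw/σ), v_{ℓ+1}*] → [a_ℓ⁻, a_ℓ⁺]` through unique minimizers
      (∀ ℓ : ℕ, 1 ≤ ℓ → ∃ aℓ : ℝ → ℝ,
        ContinuousOn aℓ (Set.Icc (max (vs ℓ) (1 + (ℓ : ℝ) * w / σ)) (vs (ℓ + 1))) ∧
        StrictMonoOn aℓ (Set.Icc (max (vs ℓ) (1 + (ℓ : ℝ) * w / σ)) (vs (ℓ + 1))) ∧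
        aℓ (max (vs ℓ) (1 + (ℓ : ℝ) * w / σ)) = am ℓ ∧ aℓ (vs (ℓ + 1)) = ap ℓ ∧
        ∀ v ∈ Set.Ioo (max (vs ℓ) (1 + (ℓ : ℝ) * w / σ)) (vs (ℓ + 1)),
          UniqueMin2 w σ v (ℓ, aℓ v)) ∧
      -- (4) coexistence at each critical slope, and jump of the per-layer areas
      (∀ ℓ : ℕ, 1 ≤ ℓ →
        F2 w σ (vs ℓ) (ℓ - 1, ap (ℓ - 1)) = F2 w σ (vs ℓ) (ℓ, am ℓ) ∧
        Adm2 w (ℓ - 1, ap (ℓ - 1)) ∧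
        (∀ q, Adm2 w q → F2 w σ (vs ℓ) (ℓ, am ℓ) ≤ F2 w σ (vs ℓ) q)) ∧
      (∀ ℓ : ℕ, 2 ≤ ℓ → am ℓ / (ℓ : ℝ) < ap (ℓ - 1) / ((ℓ : ℝ) - 1)) := by
  open VP2 in
  · refine ⟨critSlope w σ, fun ℓ => optArea w σ ℓ (critSlope w σ ℓ),
      fun ℓ => optArea w σ ℓ (critSlope w σ (ℓ + 1)), rfl, critSlope_strictMono hw0 hw4 hσ,
      optArea_zero _, ?_,
      fun ℓ _ => ⟨optArea_mem_Icc hw0 hw4 hσ ℓ _, optArea_mem_Icc hw0 hw4 hσ ℓ _⟩,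
      fun v _ hv => uniqueMin2_zero hw0 hw4 hσ hv,
      fun ℓ hℓ hv => ⟨optArea_of_le hv.le, fun v h₁ h₂ => optArea_of_le h₂.le ▸
        uniqueMin2_optArea hw0 hw4 hσ hℓ h₁ (h₂.trans (kinkSlope_lt_critSlope hw0 hw4 hσ ℓ))⟩,
      fun ℓ hℓ => ⟨optArea w σ ℓ, (optArea_continuous hw0 hw4 hσ ℓ).continuousOn,
        (optArea_strictMonoOn hw0 hw4 hσ hℓ).mono fun v hv => (le_max_right _ _).trans hv.1,
        optArea_max_kinkSlope _, rfl,
        fun v hv => uniqueMin2_optArea hw0 hw4 hσ hℓ (max_lt_iff.1 hv.1).1 hv.2⟩, ?_, ?_⟩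
    · rintro (_ | k) hk
      · omega
      exact ⟨optArea_lt_optArea hw0 hw4 hσ k.lt_succ_self _, optArea_critSlope_lt hw0 hw4 hσ hk⟩
    · rintro (_ | k) hk
      · omega
      exact ⟨(sub_eq_zero.1 (energyGap_critSlope hw0 hw4 hσ k)).symm,
        adm2_iff.2 (optArea_mem_Icc hw0 hw4 hσ k _), fun q => F2_critSlope_le hw0 hw4 hσ k⟩
    · rintro (_ | _ | k) hk
      · omega
      · omega
      convert optArea_succ_div_lt hw0 hw4 hσ k.succ_pos (kinkSlope_lt_critSlope hw0 hw4 hσ (k + 1))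
        using 2 <;> push_cast <;> ring

/-- the structure theorem for the type-2 variational problem `VP²_v`. -/
theorem structure_theorem_type2 (w σ : ℝ) (hw0 : 0 < w) (hw4 : w < 4) (hσ : 0 < σ)
    (hnd : ∀ n : ℕ, (n : ℝ) ≠ 4 / (4 - w)) :
    ∃ vs am ap : ℕ → ℝ,
      -- strictly increasing critical slopes `0 = v₀* < v₁* < ⋯`
      vs 0 = 0 ∧ StrictMono vs ∧
      -- strictly increasing areas `0 = a₀⁺ < a₁⁻ < a₁⁺ < a₂⁻ < ⋯`
      ap 0 = 0 ∧ (∀ ℓ : ℕ, 1 ≤ ℓ → ap (ℓ - 1) < am ℓ ∧ am ℓ < ap ℓ) ∧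
      (∀ ℓ : ℕ, 1 ≤ ℓ → am ℓ ∈ Set.Icc ((ℓ : ℝ) * w) (4 * (ℓ : ℝ)) ∧
        ap ℓ ∈ Set.Icc ((ℓ : ℝ) * w) (4 * (ℓ : ℝ))) ∧
      -- (1) for `v ∈ [0, v₁*)` the empty stack is the unique minimizer
      (∀ v : ℝ, 0 ≤ v → v < vs 1 → UniqueMin2 w σ v (0, 0)) ∧
      -- (2) if `v_ℓ* < 1 + ℓw/σ`, then `a_ℓ⁻ = ℓw` and for `v ∈ (v_ℓ*, 1 + ℓw/σ)`
      -- the unique minimizer is `(ℓ, ℓw)`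
      (∀ ℓ : ℕ, 1 ≤ ℓ → vs ℓ < 1 + (ℓ : ℝ) * w / σ →
        am ℓ = (ℓ : ℝ) * w ∧
        ∀ v : ℝ, vs ℓ < v → v < 1 + (ℓ : ℝ) * w / σ →
          UniqueMin2 w σ v (ℓ, (ℓ : ℝ) * w)) ∧
      -- (3) a continuous increasing bijection
      -- `a_ℓ : [max(v_ℓ*, 1+ℓw/σ), v_{ℓ+1}*] → [a_ℓ⁻, a_ℓ⁺]` through unique minimizers
      (∀ ℓ : ℕ, 1 ≤ ℓ → ∃ aℓ : ℝ → ℝ,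
        ContinuousOn aℓ (Set.Icc (max (vs ℓ) (1 + (ℓ : ℝ) * w / σ)) (vs (ℓ + 1))) ∧
        StrictMonoOn aℓ (Set.Icc (max (vs ℓ) (1 + (ℓ : ℝ) * w / σ)) (vs (ℓ + 1))) ∧
        aℓ (max (vs ℓ) (1 + (ℓ : ℝ) * w / σ)) = am ℓ ∧ aℓ (vs (ℓ + 1)) = ap ℓ ∧
        ∀ v ∈ Set.Ioo (max (vs ℓ) (1 + (ℓ : ℝ) * w / σ)) (vs (ℓ + 1)),
          UniqueMin2 w σ v (ℓ, aℓ v)) ∧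
      -- (4) coexistence at each critical slope, and jump of the per-layer areas
      (∀ ℓ : ℕ, 1 ≤ ℓ →
        F2 w σ (vs ℓ) (ℓ - 1, ap (ℓ - 1)) = F2 w σ (vs ℓ) (ℓ, am ℓ) ∧
        Adm2 w (ℓ - 1, ap (ℓ - 1)) ∧
        (∀ q, Adm2 w q → F2 w σ (vs ℓ) (ℓ, am ℓ) ≤ F2 w σ (vs ℓ) q)) ∧
      (∀ ℓ : ℕ, 2 ≤ ℓ → am ℓ / (ℓ : ℝ) < ap (ℓ - 1) / ((ℓ : ℝ) - 1)) :=
  structure_theorem_type2_general w σ hw0 hw4 hσ
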